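/- Let τ be an M-topology on M : X → ℕ and let A : X → ℕ be a sub-M-set of M. Then the exterior of A equals the M-complement of the closure of A: ext(A) = (cl(A))ᶜ, i.e., for every x ∈ X, ext(A)(x) = M(x) − cl(A)(x); equivalently, cl(Aᶜ) = (int(A))ᶜ, i.e., cl(Aᶜ)(x) = M(x) − int(A)(x) for every x ∈ X. -/

import Mathlib

/-- M-complement of a sub-M-set: `Aᶜ = M ⊖ A` (pointwise truncated subtraction). -/
def mcompl {X : Type*} (M A : X → ℕ) : X → ℕ := fun x => M x - A x

/-- `τ` is an M-topology on the multiset `M : X → ℕ`. -/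
structure IsMTopology {X : Type*} (M : X → ℕ) (τ : Set (X → ℕ)) : Prop where
  le_of_mem : ∀ N ∈ τ, N ≤ M
  top_mem : M ∈ τ
  zero_mem : (0 : X → ℕ) ∈ τ
  sSup_mem : ∀ S ⊆ τ, (fun x => sSup {n | ∃ N ∈ S, N x = n}) ∈ τ
  min_mem : ∀ U ∈ τ, ∀ V ∈ τ, (fun x => min (U x) (V x)) ∈ τ

/-- Interior: pointwise supremum of all open `G ∈ τ` with `G ≤ A`. -/
noncomputable def mint {X : Type*} (τ : Set (X → ℕ)) (A : X → ℕ) : X → ℕ :=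
  fun x => sSup {n | ∃ G ∈ τ, G ≤ A ∧ G x = n}

/-- Closure: pointwise infimum of all closed `K` with `A ≤ K ≤ M`. -/
noncomputable def mcl {X : Type*} (M : X → ℕ) (τ : Set (X → ℕ)) (A : X → ℕ) : X → ℕ :=
  fun x => sInf {n | ∃ K, mcompl M K ∈ τ ∧ A ≤ K ∧ K ≤ M ∧ K x = n}

/-- Exterior: interior of the M-complement. -/
noncomputable def mext {X : Type*} (M : X → ℕ) (τ : Set (X → ℕ)) (A : X → ℕ) : X → ℕ :=
  mint τ (mcompl M A)

/-- Boundary: `bd(A) = cl(A) ∩ cl(Aᶜ)` (pointwise min). -/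
noncomputable def mbd {X : Type*} (M : X → ℕ) (τ : Set (X → ℕ)) (A : X → ℕ) : X → ℕ :=
  fun x => min (mcl M τ A x) (mcl M τ (mcompl M A) x)

/-
Closed sets `K` with `A ≤ K ≤ M` are exactly the M-complements of open sets `G ≤ Aᶜ`, and
`K ↦ Kᶜ` is an order-reversing involution on sub-M-sets. Hence the least closed set above `A` is
the complement of the largest open set below `Aᶜ`: `cl(A) = (int(Aᶜ))ᶜ = ext(A)ᶜ`. Taking
complements once more, and applying the same identity to `Aᶜ` (with `Aᶜᶜ = A`), gives both claims.
-/

section MComplement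

variable {X : Type*} {M A B : X → ℕ}

@[simp]
lemma mcompl_apply (x : X) : mcompl M A x = M x - A x := rfl

lemma mcompl_le : mcompl M A ≤ M := fun _ => Nat.sub_le _ _

lemma mcompl_anti (h : A ≤ B) : mcompl M B ≤ mcompl M A := fun x => Nat.sub_le_sub_left (h x) _

lemma mcompl_mcompl (h : A ≤ M) : mcompl M (mcompl M A) = A := by
  funext x
  simp only [mcompl_apply]
  have : A x ≤ M x := h x
  omega

lemma mcompl_self : mcompl M M = 0 := by
  funext x
  simp

end MComplement

section MInteriorClosure

variable {X : Type*} {M : X → ℕ} {τ : Set (X → ℕ)}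

lemma le_mint {G A : X → ℕ} (hG : G ∈ τ) (hGA : G ≤ A) : G ≤ mint τ A := fun x =>
  le_csSup ⟨A x, by rintro n ⟨G', _, hG'A, rfl⟩; exact hG'A x⟩ ⟨G, hG, hGA, rfl⟩

lemma mcl_le {A K : X → ℕ} (hK : mcompl M K ∈ τ) (hAK : A ≤ K) (hKM : K ≤ M) (x : X) :
    mcl M τ A x ≤ K x :=
  Nat.sInf_le ⟨K, hK, hAK, hKM, rfl⟩

namespace IsMTopology

lemma mint_le (hτ : IsMTopology M τ) (A : X → ℕ) : mint τ A ≤ A := fun x =>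
  csSup_le ⟨0, 0, hτ.zero_mem, fun _ => Nat.zero_le _, rfl⟩
    (by rintro n ⟨G, _, hGA, rfl⟩; exact hGA x)

lemma mint_mem (hτ : IsMTopology M τ) (A : X → ℕ) : mint τ A ∈ τ := by
  convert hτ.sSup_mem {G | G ∈ τ ∧ G ≤ A} (fun G hG => hG.1) using 4 with x n
  simp only [Set.mem_ofPred_eq, and_assoc]
  rfl

lemma le_mcl (hτ : IsMTopology M τ) {A : X → ℕ} (hA : A ≤ M) {x : X} {n : ℕ}
    (h : ∀ K, mcompl M K ∈ τ → A ≤ K → K ≤ M → n ≤ K x) : n ≤ mcl M τ A x := by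
  have hM : mcompl M M ∈ τ := mcompl_self (M := M) ▸ hτ.zero_mem
  exact le_csInf ⟨M x, M, hM, hA, le_rfl, rfl⟩
    (by rintro _ ⟨K, hK, hAK, hKM, rfl⟩; exact h K hK hAK hKM)

theorem mcl_eq_mcompl_mint_mcompl (hτ : IsMTopology M τ) {A : X → ℕ} (hA : A ≤ M) :
    mcl M τ A = mcompl M (mint τ (mcompl M A)) := by
  set I := mint τ (mcompl M A)
  have hIM : I ≤ M := (hτ.mint_le _).trans mcompl_le
  funext x
  apply le_antisymm
  · refine mcl_le (by rw [mcompl_mcompl hIM]; exact hτ.mint_mem _) ?_ mcompl_le x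
    simpa only [mcompl_mcompl hA] using mcompl_anti (M := M) (hτ.mint_le (mcompl M A))
  · refine hτ.le_mcl hA fun K hK hAK _ => ?_
    have : mcompl M K x ≤ I x := le_mint hK (mcompl_anti hAK) x
    simp only [mcompl_apply] at this ⊢
    omega

end IsMTopology

end MInteriorClosure

theorem ext_eq_compl_cl {X : Type*} (M : X → ℕ) (τ : Set (X → ℕ))
    (hτ : IsMTopology M τ) (A : X → ℕ) (hA : A ≤ M) :
    (∀ x, mext M τ A x = M x - mcl M τ A x) ∧
      (∀ x, mcl M τ (mcompl M A) x = M x - mint τ A x) := by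
  have hext : mint τ (mcompl M A) ≤ M := (hτ.mint_le _).trans mcompl_le
  refine ⟨fun x => ?_, fun x => ?_⟩
  · rw [hτ.mcl_eq_mcompl_mint_mcompl hA, ← mcompl_apply, mcompl_mcompl hext]
    rfl
  · rw [hτ.mcl_eq_mcompl_mint_mcompl mcompl_le, mcompl_mcompl hA, mcompl_apply]
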